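/- If every space N_α (α ∈ A) is Hausdorff, then the quotient space N_upp is Hausdorff. -/

import Mathlib

/-!
Two points of `N_upp` represented in `N_α` and `N_β` are equal exactly when their images in
`N_γ`, `γ = max α β`, coincide, because the `ψ` are injective and compose. Hence distinct points
are separated by disjoint open sets of the single Hausdorff space `N_γ`, and these stay open and
disjoint in `N_upp`: the quotient map is open, since the saturation of an open `V ⊆ N_α` meets
`N_β` in `ψ_{βγ}⁻¹ (ψ_{αγ} V)`, and `N_γ → N_upp` is injective.
-/

open Topology Filter

/-- The identification relation on the disjoint union `Σ α, N α`:
`(α,p) ∼ (β,q)` iff (`α ≤ β` and `ψ_{αβ}(p) = q`) or (`β ≤ α` and `ψ_{βα}(q) = p`). -/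
def simRel {A : Type*} [LinearOrder A] {N : A → Type*}
    (ψ : ∀ α β : A, α ≤ β → N α → N β) :
    (Σ α, N α) → (Σ α, N α) → Prop :=
  fun x y =>
    (∃ h : x.1 ≤ y.1, ψ x.1 y.1 h x.2 = y.2) ∨
    (∃ h : y.1 ≤ x.1, ψ y.1 x.1 h y.2 = x.2)

open Function

section SimRel

variable {A : Type*} [LinearOrder A] {N : A → Type*} {ψ : ∀ α β : A, α ≤ β → N α → N β}

theorem simRel_iff_map_eq (hinj : ∀ (α β : A) (h : α ≤ β), Injective (ψ α β h))
    (hcomp : ∀ (α β γ : A) (h₁ : α ≤ β) (h₂ : β ≤ γ),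
      (ψ β γ h₂) ∘ (ψ α β h₁) = ψ α γ (h₁.trans h₂))
    {α β γ : A} (hα : α ≤ γ) (hβ : β ≤ γ) (p : N α) (q : N β) :
    simRel ψ ⟨α, p⟩ ⟨β, q⟩ ↔ ψ α γ hα p = ψ β γ hβ q := by
  have hcomp' : ∀ {α β} (h : α ≤ β) (hβ : β ≤ γ) (x : N α),
      ψ β γ hβ (ψ α β h x) = ψ α γ (h.trans hβ) x :=
    fun h hβ x => congrFun (hcomp _ _ _ h hβ) x
  constructor
  · rintro (⟨h, e⟩ | ⟨h, e⟩)
    · change ψ α β h p = q at e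
      rw [← e, hcomp']
    · change ψ β α h q = p at e
      rw [← e, hcomp']
  · intro e
    rcases le_total α β with h | h
    · exact Or.inl ⟨h, hinj β γ hβ (by rw [hcomp', e])⟩
    · exact Or.inr ⟨h, hinj α γ hα (by rw [hcomp', e])⟩

theorem simRel_equivalence (hinj : ∀ (α β : A) (h : α ≤ β), Injective (ψ α β h))
    (hcomp : ∀ (α β γ : A) (h₁ : α ≤ β) (h₂ : β ≤ γ),
      (ψ β γ h₂) ∘ (ψ α β h₁) = ψ α γ (h₁.trans h₂)) :
    Equivalence (simRel ψ) where
  refl := fun ⟨α, p⟩ => (simRel_iff_map_eq hinj hcomp le_rfl le_rfl p p).2 rfl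
  symm := fun h => h.symm
  trans := by
    rintro ⟨α, p⟩ ⟨β, q⟩ ⟨γ, r⟩ hpq hqr
    let δ := max α (max β γ)
    have hα : α ≤ δ := le_max_left _ _
    have hβ : β ≤ δ := (le_max_left _ _).trans (le_max_right _ _)
    have hγ : γ ≤ δ := (le_max_right _ _).trans (le_max_right _ _)
    rw [simRel_iff_map_eq hinj hcomp hα hβ] at hpq
    rw [simRel_iff_map_eq hinj hcomp hβ hγ] at hqr
    exact (simRel_iff_map_eq hinj hcomp hα hγ p r).2 (hpq.trans hqr)

theorem quot_mk_simRel_eq_iff (hinj : ∀ (α β : A) (h : α ≤ β), Injective (ψ α β h))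
    (hcomp : ∀ (α β γ : A) (h₁ : α ≤ β) (h₂ : β ≤ γ),
      (ψ β γ h₂) ∘ (ψ α β h₁) = ψ α γ (h₁.trans h₂))
    {α β γ : A} (hα : α ≤ γ) (hβ : β ≤ γ) (p : N α) (q : N β) :
    Quot.mk (simRel ψ) ⟨α, p⟩ = Quot.mk (simRel ψ) ⟨β, q⟩ ↔ ψ α γ hα p = ψ β γ hβ q :=
  Quot.eq.trans <| (simRel_equivalence hinj hcomp).eqvGen_iff.trans <|
    simRel_iff_map_eq hinj hcomp hα hβ p q

theorem injective_quot_mk_simRel_sigmaMk (hinj : ∀ (α β : A) (h : α ≤ β), Injective (ψ α β h))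
    (hcomp : ∀ (α β γ : A) (h₁ : α ≤ β) (h₂ : β ≤ γ),
      (ψ β γ h₂) ∘ (ψ α β h₁) = ψ α γ (h₁.trans h₂)) (α : A) :
    Injective fun p : N α => Quot.mk (simRel ψ) ⟨α, p⟩ :=
  fun p q h => hinj α α le_rfl ((quot_mk_simRel_eq_iff hinj hcomp le_rfl le_rfl p q).1 h)

variable [∀ α, TopologicalSpace (N α)]

theorem isOpenMap_quot_mk_simRel (hψ : ∀ (α β : A) (h : α ≤ β), IsOpenEmbedding (ψ α β h))
    (hcomp : ∀ (α β γ : A) (h₁ : α ≤ β) (h₂ : β ≤ γ),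
      (ψ β γ h₂) ∘ (ψ α β h₁) = ψ α γ (h₁.trans h₂)) :
    IsOpenMap (Quot.mk (simRel ψ)) := by
  have hinj α β h := (hψ α β h).injective
  refine isOpenMap_sigma.2 fun α V hV => isOpen_coinduced.2 <| isOpen_sigma_iff.2 fun β => ?_
  have hsat : Sigma.mk β ⁻¹' (Quot.mk (simRel ψ) ⁻¹' ((fun p => Quot.mk _ ⟨α, p⟩) '' V)) =
      ψ β (max α β) (le_max_right _ _) ⁻¹' (ψ α (max α β) (le_max_left _ _) '' V) := by
    ext q
    simp only [Set.mem_preimage, Set.mem_image, quot_mk_simRel_eq_iff hinj hcomp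
      (le_max_left α β) (le_max_right α β)]
  rw [hsat]
  exact ((hψ _ _ _).isOpenMap V hV).preimage (hψ _ _ _).continuous

end SimRel

theorem quotient_t2Space_general
    {A : Type*} [LinearOrder A]
    {N : A → Type*} [∀ α, TopologicalSpace (N α)]
    (ψ : ∀ α β : A, α ≤ β → N α → N β)
    (hψ : ∀ (α β : A) (h : α ≤ β), IsOpenEmbedding (ψ α β h))
    (hψcomp : ∀ (α β γ : A) (h₁ : α ≤ β) (h₂ : β ≤ γ),
      (ψ β γ h₂) ∘ (ψ α β h₁) = ψ α γ (h₁.trans h₂))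
    (hT2 : ∀ α : A, T2Space (N α)) :
    T2Space (Quot (simRel ψ)) := by
  have hinj α β h := (hψ α β h).injective
  refine ⟨Quot.ind fun ⟨α, p⟩ => Quot.ind fun ⟨β, q⟩ hne => ?_⟩
  let γ := max α β
  have hα : α ≤ γ := le_max_left _ _
  have hβ : β ≤ γ := le_max_right _ _
  let j := fun r : N γ => Quot.mk (simRel ψ) ⟨γ, r⟩
  have hj : IsOpenMap j := (isOpenMap_quot_mk_simRel hψ hψcomp).comp
    IsOpenEmbedding.sigmaMk.isOpenMap
  have hjp : j (ψ α γ hα p) = Quot.mk _ ⟨α, p⟩ :=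
    (Quot.sound (r := simRel ψ) (Or.inl ⟨hα, rfl⟩)).symm
  have hjq : j (ψ β γ hβ q) = Quot.mk _ ⟨β, q⟩ :=
    (Quot.sound (r := simRel ψ) (Or.inl ⟨hβ, rfl⟩)).symm
  obtain ⟨V, W, hV, hW, hpV, hqW, hVW⟩ :=
    t2_separation fun h => hne ((quot_mk_simRel_eq_iff hinj hψcomp hα hβ p q).2 h)
  exact ⟨j '' V, j '' W, hj V hV, hj W hW, hjp ▸ Set.mem_image_of_mem j hpV,
    hjq ▸ Set.mem_image_of_mem j hqW,
    (Set.disjoint_image_iff (injective_quot_mk_simRel_sigmaMk hinj hψcomp γ)).2 hVW⟩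

/-- If every `N_α` is Hausdorff then the quotient `N_upp` is Hausdorff. -/
theorem quotient_t2Space
    {M : Type*} [TopologicalSpace M]
    {A : Type*} [LinearOrder A] [Nonempty A]
    {N : A → Type*} [∀ α, TopologicalSpace (N α)]
    (ι : ∀ α, M → N α) (hι : ∀ α, IsOpenEmbedding (ι α))
    (ψ : ∀ α β : A, α ≤ β → N α → N β)
    (hψ : ∀ (α β : A) (h : α ≤ β), IsOpenEmbedding (ψ α β h))
    (hψι : ∀ (α β : A) (h : α ≤ β), (ψ α β h) ∘ (ι α) = ι β)
    (hψid : ∀ (α : A) (h : α ≤ α), ψ α α h = id)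
    (hψcomp : ∀ (α β γ : A) (h₁ : α ≤ β) (h₂ : β ≤ γ),
      (ψ β γ h₂) ∘ (ψ α β h₁) = ψ α γ (h₁.trans h₂))
    (hT2 : ∀ α : A, T2Space (N α)) :
    T2Space (Quot (simRel ψ)) :=
  quotient_t2Space_general ψ hψ hψcomp hT2
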